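/- Let 0 < ε < 1/2, let k ≥ 2 be an integer, and let n be an integer with n > 200k²/ε. Let p = (1 − 0.8ε)·(k−2)!/n^{k−1} and fix a vertex v ∈ {1,…,n}. Then in the random hypergraph H_{n,p;k}, the probability that the connected component containing v has more than (16k/ε²)·log n vertices is less than n^{−2}. -/

import Mathlib

open scoped Classical

/-- Two vertices touch if some hyperedge of `E` contains both. -/
def Touches {V : Type*} (E : Finset (Finset V)) (v w : V) : Prop :=
  ∃ e ∈ E, v ∈ e ∧ w ∈ e

/-- The connected component of a vertex `v`. -/
def component {V : Type*} (E : Finset (Finset V)) (v : V) : Set V :=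
  {w | Relation.ReflTransGen (Touches E) v w}

/-- `H` is `k`-uniform: every hyperedge has exactly `k` vertices. -/
def IsUniform (k : ℕ) {n : ℕ} (H : Finset (Finset (Fin n))) : Prop :=
  ∀ e ∈ H, e.card = k

/-- The probability of the event `A` under `H_{n,p;k}`, the random `k`-uniform hypergraph
on `{1,…,n}` in which each of the `C(n,k)` possible hyperedges appears independently with
probability `p`. -/
noncomputable def probHnp (n k : ℕ) (p : ℝ) (A : Finset (Finset (Fin n)) → Prop) : ℝ :=
  ∑ H : Finset (Finset (Fin n)),
    if IsUniform k H ∧ A H then p ^ H.card * (1 - p) ^ (Nat.choose n k - H.card) else 0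


/-!
Explore the component of `v` breadth first, querying every potential edge at most once: exploring
a vertex queries the `k`-sets through it that avoid the vertices explored before. Each edge found
adds at most `k - 1` vertices, so if the component has at least `l` vertices, exploring `l` of
them gives at least `(l - 1)/(k - 1)` positive answers among at most `l·C(n-1, k-1)` queries.
Positive answers are dominated by a binomial variable of mean at most `l(1 - 0.8ε)/(k - 1)`, and
Chernoff's bound with parameter `0.8ε` makes this tail `exp(-Ω(ε² l / k))`, which is below
`n⁻²` for `l > 16 k log n / ε²`.
-/

open Finset Real

section Bernoulli

variable {α : Type*}

/-- The probability that the random subset of `R` containing each element independently with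
probability `p` satisfies `A`. -/
noncomputable def bernoulliProb (p : ℝ) (R : Finset α) (A : Finset α → Prop) : ℝ :=
  ∑ H ∈ R.powerset, if A H then p ^ #H * (1 - p) ^ (#R - #H) else 0

variable {p : ℝ} {R : Finset α} {A B : Finset α → Prop}

theorem bernoulliProb_congr (h : ∀ H ⊆ R, A H ↔ B H) :
    bernoulliProb p R A = bernoulliProb p R B :=
  sum_congr rfl fun H hH => if_congr (h H (mem_powerset.1 hH)) rfl rfl

theorem bernoulliProb_mono (hp0 : 0 ≤ p) (hp1 : p ≤ 1) (h : ∀ H ⊆ R, A H → B H) :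
    bernoulliProb p R A ≤ bernoulliProb p R B := by
  refine sum_le_sum fun H hH => ?_
  have : 0 ≤ 1 - p := by linarith
  split_ifs with hA hB
  · rfl
  · exact absurd (h H (mem_powerset.1 hH) hA) hB
  · positivity
  · rfl

theorem bernoulliProb_const (P : Prop) :
    bernoulliProb p R (fun _ => P) = if P then 1 else 0 := by
  split_ifs with hP
  · simp only [bernoulliProb, if_pos hP, sum_pow_mul_eq_add_pow, add_sub_cancel, one_pow]
  · simp [bernoulliProb, hP]

theorem bernoulliProb_insert [DecidableEq α] {a : α} {s : Finset α} (ha : a ∉ s) :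
    bernoulliProb p (insert a s) A =
      p * bernoulliProb p s (fun H => A (insert a H)) + (1 - p) * bernoulliProb p s A := by
  rw [bernoulliProb, sum_powerset_insert ha, bernoulliProb, bernoulliProb, mul_sum, mul_sum,
    add_comm, card_insert_of_notMem ha]
  congr 1 <;> refine sum_congr rfl fun H hH => ?_ <;> have hHs := mem_powerset.1 hH
  · rw [card_insert_of_notMem fun haH => ha (hHs haH)]
    have := card_le_card hHs
    split_ifs
    · rw [show #s + 1 - (#H + 1) = #s - #H by omega]; ring
    · ring
  · have := card_le_card hHs
    split_ifs
    · rw [show #s + 1 - #H = #s - #H + 1 by omega]; ring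
    · ring

end Bernoulli

/-- An adaptive strategy querying membership of elements of `α` in an unknown finset. -/
inductive DecisionTree (α : Type*) where
  | leaf : DecisionTree α
  | query (e : α) (yes no : DecisionTree α) : DecisionTree α

namespace DecisionTree

variable {α : Type*} [DecidableEq α]

def successes : DecisionTree α → Finset α → ℕ
  | leaf, _ => 0
  | query e yes no, H => if e ∈ H then successes yes H + 1 else successes no H

inductive Valid : DecisionTree α → Finset α → ℕ → Prop where
  | leaf (R : Finset α) (q : ℕ) : Valid leaf R q
  | query {e : α} {yes no : DecisionTree α} {R : Finset α} {q : ℕ} (he : e ∈ R)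
      (hyes : Valid yes (R.erase e) q) (hno : Valid no (R.erase e) q) :
      Valid (query e yes no) R (q + 1)

theorem Valid.mono {t : DecisionTree α} {R R' : Finset α} {q q' : ℕ} (ht : t.Valid R q)
    (hR : R ⊆ R') (hq : q ≤ q') : t.Valid R' q' := by
  induction ht generalizing R' q' with
  | leaf => exact .leaf _ _
  | query he _ _ ihyes ihno =>
    obtain ⟨q', rfl⟩ : ∃ q'', q' = q'' + 1 := ⟨q' - 1, by omega⟩
    exact .query (hR he) (ihyes (erase_subset_erase _ hR) (by omega))
      (ihno (erase_subset_erase _ hR) (by omega))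

theorem Valid.successes_insert {t : DecisionTree α} {R : Finset α} {q : ℕ} (ht : t.Valid R q)
    {a : α} (ha : a ∉ R) (H : Finset α) : t.successes (insert a H) = t.successes H := by
  induction ht with
  | leaf => rfl
  | @query e _ _ R _ he _ _ ihyes ihno =>
    have hea : e ≠ a := fun h => ha (h ▸ he)
    have ha' : a ∉ R.erase e := fun h => ha (mem_of_mem_erase h)
    simp only [successes, mem_insert, hea, false_or, ihyes ha', ihno ha']

/-- The answers along a branch of a valid tree are independent `p`-coins, so this is Chernoff's
bound for a binomial variable with `q` trials. -/
theorem Valid.bernoulliProb_le {t : DecisionTree α} {R : Finset α} {q : ℕ} (ht : t.Valid R q)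
    {p lam : ℝ} (hp0 : 0 ≤ p) (hp1 : p ≤ 1) (hlam : 0 ≤ lam) (a : ℝ) :
    bernoulliProb p R (fun H => a ≤ t.successes H) ≤
      exp (q * (p * (exp lam - 1)) - lam * a) := by
  have hc : 0 ≤ p * (exp lam - 1) := mul_nonneg hp0 (by linarith [one_le_exp hlam])
  induction ht generalizing a with
  | leaf R q =>
    simp only [successes, Nat.cast_zero, bernoulliProb_const]
    split_ifs with ha
    · exact one_le_exp (by nlinarith [mul_nonneg (Nat.cast_nonneg (α := ℝ) q) hc])
    · exact (exp_pos _).le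
  | @query e yes no R q he hyes hno ihyes ihno =>
    set c := p * (exp lam - 1)
    have heR : e ∉ R.erase e := notMem_erase e R
    have hin : bernoulliProb p (R.erase e)
        (fun H => a ≤ (DecisionTree.query e yes no).successes (insert e H)) ≤
          exp (q * c - lam * a) * exp lam :=
      calc _ = bernoulliProb p (R.erase e) (fun H => a - 1 ≤ yes.successes H) :=
            bernoulliProb_congr fun H _ => by
              simp only [successes, mem_insert_self, if_true, hyes.successes_insert heR]
              push_cast
              constructor <;> intro <;> linarith
        _ ≤ exp (q * c - lam * (a - 1)) := ihyes (a - 1)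
        _ = _ := by rw [← exp_add]; ring_nf
    have hout : bernoulliProb p (R.erase e)
        (fun H => a ≤ (DecisionTree.query e yes no).successes H) ≤ exp (q * c - lam * a) :=
      calc _ = bernoulliProb p (R.erase e) (fun H => a ≤ no.successes H) :=
            bernoulliProb_congr fun H hH => by
              simp only [successes, if_neg fun h => heR (hH h)]
        _ ≤ _ := ihno a
    have h1p : 0 ≤ 1 - p := by linarith
    rw [← insert_erase he, bernoulliProb_insert heR]
    calc _ ≤ p * (exp (q * c - lam * a) * exp lam) + (1 - p) * exp (q * c - lam * a) := by
          gcongr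
      _ = exp (q * c - lam * a) * (c + 1) := by ring
      _ ≤ exp (q * c - lam * a) * exp c := by gcongr; exact add_one_le_exp c
      _ = exp (((q + 1 : ℕ) : ℝ) * c - lam * a) := by rw [← exp_add]; push_cast; ring_nf

end DecisionTree

section Exploration

variable {V : Type*}

theorem component_subset {H : Finset (Finset V)} {v : V} {D : Finset V} (hv : v ∈ D)
    (hD : ∀ e ∈ H, ∀ w ∈ D, w ∈ e → e ⊆ D) : component H v ⊆ D := by
  intro w hw
  induction hw with
  | refl => exact hv
  | tail _ htouch ih =>
    obtain ⟨e, heH, hue, hwe⟩ := htouch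
    exact hD e heH _ ih hue hwe

variable [DecidableEq V]

open DecisionTree

theorem card_union_le_of_mem {k : ℕ} {u : V} {D e : Finset V} (huD : u ∈ D) (hue : u ∈ e)
    (he : #e = k) : #(D ∪ e) ≤ #D + (k - 1) := by
  rw [← insert_erase hue, union_insert, insert_eq_of_mem (mem_union_left _ huD)]
  calc #(D ∪ e.erase u) ≤ #D + #(e.erase u) := card_union_le _ _
    _ = #D + (k - 1) := by rw [card_erase_of_mem hue, he]

def queryAll (next : Finset V → DecisionTree (Finset V)) :
    List (Finset V) → Finset V → DecisionTree (Finset V)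
  | [], D => next D
  | e :: es, D => .query e (queryAll next es (D ∪ e)) (queryAll next es D)

theorem valid_queryAll {next : Finset V → DecisionTree (Finset V)} {q : ℕ} :
    ∀ {es : List (Finset V)} {R : Finset (Finset V)}, es.Nodup → (∀ e ∈ es, e ∈ R) →
      (∀ D, (next D).Valid (R \ es.toFinset) q) →
      ∀ D, (queryAll next es D).Valid R (es.length + q)
  | [], R, _, _, hnext, D => by simpa [queryAll] using hnext D
  | e :: es, R, hnd, hR, hnext, D => by
    obtain ⟨hees, hnd⟩ := List.nodup_cons.1 hnd
    have hR' : ∀ f ∈ es, f ∈ R.erase e := fun f hf =>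
      mem_erase.2 ⟨fun h => hees (h ▸ hf), hR f (List.mem_cons_of_mem e hf)⟩
    have hnext' : ∀ D, (next D).Valid (R.erase e \ es.toFinset) q := by
      simpa [sdiff_insert, erase_sdiff_comm] using hnext
    rw [List.length_cons, add_right_comm]
    exact .query (hR e List.mem_cons_self) (valid_queryAll hnd hR' hnext' _)
      (valid_queryAll hnd hR' hnext' _)

theorem exists_successes_queryAll {k : ℕ} {u : V} (H : Finset (Finset V))
    (next : Finset V → DecisionTree (Finset V)) :
    ∀ {es : List (Finset V)}, (∀ e ∈ es, u ∈ e ∧ #e = k) → ∀ {D : Finset V}, u ∈ D →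
      ∃ D' m, D ⊆ D' ∧ (∀ e ∈ es, e ∈ H → e ⊆ D') ∧
        (queryAll next es D).successes H = (next D').successes H + m ∧ #D' ≤ #D + (k - 1) * m
  | [], _, D, _ => ⟨D, 0, subset_rfl, by simp, by simp [queryAll], by simp⟩
  | e :: es, hes, D, huD => by
    have hes' : ∀ f ∈ es, u ∈ f ∧ #f = k := fun f hf => hes f (List.mem_cons_of_mem e hf)
    by_cases heH : e ∈ H
    · obtain ⟨D', m, hDD', hcov, hsucc, hcard⟩ :=
        exists_successes_queryAll H next hes' (mem_union_left e huD)
      refine ⟨D', m + 1, subset_union_left.trans hDD', ?_, ?_, ?_⟩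
      · rintro f hf hfH
        rcases List.mem_cons.1 hf with rfl | hf
        · exact subset_union_right.trans hDD'
        · exact hcov f hf hfH
      · simp only [queryAll, successes, if_pos heH, hsucc]; ring
      · obtain ⟨hue, hek⟩ := hes e List.mem_cons_self
        have := card_union_le_of_mem huD hue hek
        rw [mul_add_one]; omega
    · obtain ⟨D', m, hDD', hcov, hsucc, hcard⟩ := exists_successes_queryAll H next hes' huD
      refine ⟨D', m, hDD', ?_, ?_, hcard⟩
      · rintro f hf hfH
        rcases List.mem_cons.1 hf with rfl | hf
        · exact absurd hfH heH
        · exact hcov f hf hfH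
      · simp only [queryAll, successes, if_neg heH, hsucc]

variable [Fintype V]

def newEdges (k : ℕ) (u : V) (X : Finset V) : Finset (Finset V) :=
  {e ∈ univ.powersetCard k | u ∈ e ∧ Disjoint e X}

theorem card_newEdges_le (k : ℕ) (u : V) (X : Finset V) :
    #(newEdges k u X) ≤ (Fintype.card V - 1).choose (k - 1) := by
  have hsub : newEdges k u X ⊆ ((univ.erase u).powersetCard (k - 1)).image (insert u) := by
    intro e he
    obtain ⟨hek, hue, -⟩ := mem_filter.1 he
    refine mem_image.2 ⟨e.erase u, mem_powersetCard.2 ⟨erase_subset_erase u (subset_univ e), ?_⟩,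
      insert_erase hue⟩
    rw [card_erase_of_mem hue, (mem_powersetCard_univ.1 hek)]
  calc #(newEdges k u X) ≤ #(((univ.erase u).powersetCard (k - 1)).image (insert u)) :=
        card_le_card hsub
    _ ≤ #((univ.erase u).powersetCard (k - 1)) := card_image_le
    _ = _ := by rw [card_powersetCard, card_erase_of_mem (mem_univ u), card_univ]

/-- Breadth-first exploration of the component of the vertices in `D`: `X ⊆ D` are the explored
vertices and `b` bounds the number of vertices still to explore. Exploring `u` queries its
`newEdges`; the other edges through `u` meet `X` and were queried before. -/
noncomputable def explore (k : ℕ) : ℕ → Finset V → Finset V → DecisionTree (Finset V)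
  | 0, _, _ => .leaf
  | b + 1, X, D =>
    if h : (D \ X).Nonempty then
      queryAll (explore k b (insert h.choose X)) (newEdges k h.choose X).toList D
    else .leaf

theorem valid_explore (k : ℕ) :
    ∀ (b : ℕ) (X D : Finset V), (explore k b X D).Valid {e ∈ univ.powersetCard k | Disjoint e X}
      (b * (Fintype.card V - 1).choose (k - 1))
  | 0, _, _ => DecisionTree.Valid.leaf _ _
  | b + 1, X, D => by
    rw [explore]
    split_ifs with h
    · set u := h.choose
      have hnext : ∀ D', (explore k b (insert u X) D').Valid
          ({e ∈ (univ : Finset V).powersetCard k | Disjoint e X} \ (newEdges k u X).toList.toFinset)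
          (b * (Fintype.card V - 1).choose (k - 1)) := fun D' =>
        (valid_explore k b (insert u X) D').mono (fun e he => by
          simp only [toList_toFinset, newEdges, mem_sdiff, mem_filter,
            disjoint_insert_right] at he ⊢
          tauto) le_rfl
      refine (valid_queryAll (nodup_toList _) (fun e he => ?_) hnext D).mono subset_rfl ?_
      · simp only [mem_toList, newEdges, mem_filter] at he ⊢
        exact ⟨he.1, he.2.2⟩
      · rw [length_toList, add_one_mul, add_comm]
        exact Nat.add_le_add_left (card_newEdges_le k u X) _
    · exact .leaf _ _

/-- Each success of the exploration adds at most `k - 1` discovered vertices, and the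
exploration only stops early once the whole component is discovered. -/
theorem min_ncard_component_le {k : ℕ} {H : Finset (Finset V)} (hH : ∀ e ∈ H, #e = k) (v : V) :
    ∀ (b : ℕ) {X D : Finset V}, X ⊆ D → v ∈ D → (∀ e ∈ H, ∀ u ∈ X, u ∈ e → e ⊆ D) →
      min (#X + b) (component H v).ncard ≤ (k - 1) * (explore k b X D).successes H + #D
  | 0, X, D, hXD, _, _ => by
    have := card_le_card hXD
    omega
  | b + 1, X, D, hXD, hv, hclosed => by
    rw [explore]
    split_ifs with h
    · obtain ⟨huD, huX⟩ := mem_sdiff.1 h.choose_spec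
      obtain ⟨D', m, hDD', hcov, hsucc, hcard⟩ :=
        exists_successes_queryAll H (explore k b (insert h.choose X))
          (es := (newEdges k h.choose X).toList)
          (fun e he => by
            obtain ⟨hek, hue, -⟩ := mem_filter.1 (mem_toList.1 he)
            exact ⟨hue, mem_powersetCard_univ.1 hek⟩) huD
      have hclosed' : ∀ e ∈ H, ∀ w ∈ insert h.choose X, w ∈ e → e ⊆ D' := by
        intro e he w hw hwe
        rcases mem_insert.1 hw with hwu | hwX
        · subst hwu
          by_cases heX : Disjoint e X
          · refine hcov e (mem_toList.2 (mem_filter.2 ?_)) he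
            exact ⟨mem_powersetCard_univ.2 (hH e he), hwe, heX⟩
          · obtain ⟨x, hxe, hxX⟩ := not_disjoint_iff.1 heX
            exact (hclosed e he x hxX hxe).trans hDD'
        · exact (hclosed e he w hwX hwe).trans hDD'
      have hrec := min_ncard_component_le hH v b (insert_subset (hDD' huD) (hXD.trans hDD'))
        (hDD' hv) hclosed'
      rw [card_insert_of_notMem huX] at hrec
      rw [hsucc, mul_add]
      omega
    · have hDX : D ⊆ X := sdiff_eq_empty_iff_subset.1 (not_nonempty_iff_eq_empty.1 h)
      have hcomp := component_subset hv fun e he w hw => hclosed e he w (hDX hw)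
      have := Set.ncard_le_ncard hcomp (Set.toFinite _)
      rw [Set.ncard_coe_finset] at this
      simp only [successes]
      omega

theorem bernoulliProb_le_ncard_component {p lam : ℝ} (hp0 : 0 ≤ p) (hp1 : p ≤ 1)
    (hlam : 0 ≤ lam) (k l : ℕ) (v : V) :
    bernoulliProb p (univ.powersetCard k) (fun H => l ≤ (component H v).ncard) ≤
      exp ((l * (Fintype.card V - 1).choose (k - 1) : ℕ) * (p * (exp lam - 1)) -
        lam * ((l - 1) / (k - 1 : ℕ))) := by
  have hvalid := valid_explore k l (∅ : Finset V) {v}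
  simp only [disjoint_empty_right, filter_true] at hvalid
  refine (bernoulliProb_mono hp0 hp1 fun H hH hl => ?_).trans
    (hvalid.bernoulliProb_le hp0 hp1 hlam _)
  have hbound := min_ncard_component_le (fun e he => mem_powersetCard_univ.1 (hH he)) v l
    (empty_subset _) (mem_singleton_self v) (by simp)
  rw [card_empty, zero_add, min_eq_left hl, card_singleton] at hbound
  have : (l : ℝ) ≤ (k - 1 : ℕ) * (explore k l ∅ {v}).successes H + 1 := by exact_mod_cast hbound
  exact div_le_of_le_mul₀ (Nat.cast_nonneg _) (Nat.cast_nonneg _) (by linarith)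

end Exploration

theorem one_sub_mul_exp_sub_one_sub_le {x : ℝ} (hx0 : 0 ≤ x) (hx1 : x ≤ 1) :
    (1 - x) * (exp x - 1) - x ≤ -(x ^ 2 / 2) := by
  have h := Real.exp_bound' hx0 hx1 (n := 3) (by norm_num)
  norm_num [Finset.sum_range_succ, Nat.factorial] at h
  nlinarith [mul_nonneg (sub_nonneg.2 hx1) (pow_nonneg hx0 3), pow_nonneg hx0 3]

theorem choose_mul_factorial_le_pow (n : ℕ) {k : ℕ} (hk : 2 ≤ k) :
    ((n - 1).choose (k - 1) : ℝ) * (k - 2).factorial * (k - 1 : ℕ) ≤ (n : ℝ) ^ (k - 1) := by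
  have h : (n - 1).choose (k - 1) * (k - 2).factorial * (k - 1) ≤ n ^ (k - 1) := by
    obtain ⟨j, rfl⟩ : ∃ j, k = j + 2 := ⟨k - 2, by omega⟩
    calc (n - 1).choose (j + 1) * j.factorial * (j + 1) = (n - 1).descFactorial (j + 1) := by
          rw [Nat.descFactorial_eq_factorial_mul_choose, Nat.factorial_succ]; ring
      _ ≤ (n - 1) ^ (j + 1) := Nat.descFactorial_le_pow _ _
      _ ≤ n ^ (j + 1) := Nat.pow_le_pow_left (Nat.sub_le n 1) _
  exact_mod_cast h

theorem mul_factorial_div_pow_mem_Icc {c : ℝ} (hc0 : 0 ≤ c) (hc1 : c ≤ 1) {k n : ℕ}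
    (hk : 2 ≤ k) (hkn : k ≤ n) : c * (k - 2).factorial / (n : ℝ) ^ (k - 1) ∈ Set.Icc 0 1 := by
  have hfac : (k - 2).factorial ≤ n ^ (k - 1) :=
    calc (k - 2).factorial ≤ (k - 2) ^ (k - 2) := Nat.factorial_le_pow _
      _ ≤ n ^ (k - 2) := Nat.pow_le_pow_left (by omega) _
      _ ≤ n ^ (k - 1) := Nat.pow_le_pow_right (by omega) (by omega)
  have hn : (0 : ℝ) < (n : ℝ) ^ (k - 1) := pow_pos (by exact_mod_cast (by omega : 0 < n)) _
  refine ⟨by positivity, (div_le_one hn).2 ?_⟩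
  calc c * (k - 2).factorial ≤ 1 * (k - 2).factorial := by gcongr
    _ ≤ (n : ℝ) ^ (k - 1) := by rw [one_mul]; exact_mod_cast hfac

theorem le_and_one_le_log_of_lt {ε : ℝ} (hε0 : 0 < ε) (hε : ε < 1 / 2) {k n : ℕ} (hk : 2 ≤ k)
    (hn : 200 * k ^ 2 / ε < n) : k ≤ n ∧ 1 ≤ log n := by
  have hkR : (2 : ℝ) ≤ k := by exact_mod_cast hk
  have hn400 : 400 * (k : ℝ) ^ 2 < n := lt_of_le_of_lt (by rw [le_div_iff₀ hε0]; nlinarith) hn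
  refine ⟨by exact_mod_cast (show (k : ℝ) ≤ n by nlinarith), ?_⟩
  rw [le_log_iff_exp_le (by nlinarith)]
  nlinarith [exp_one_lt_d9]

theorem exploration_exponent_lt {ε : ℝ} (hε0 : 0 < ε) (hε : ε < 1 / 2) {k n l : ℕ} (hk : 2 ≤ k)
    (hlog : 1 ≤ log n) (hl : 16 * k / ε ^ 2 * log n < l) :
    ((l * (n - 1).choose (k - 1) : ℕ) : ℝ) *
        ((1 - 0.8 * ε) * (k - 2).factorial / (n : ℝ) ^ (k - 1) * (exp (0.8 * ε) - 1)) -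
      0.8 * ε * ((l - 1) / (k - 1 : ℕ)) < -(2 * log n) := by
  set x := 0.8 * ε with hx
  have hx0 : 0 < x := by positivity
  have hx1 : x < 2 / 5 := by linarith
  have hK : ((k - 1 : ℕ) : ℝ) = k - 1 := by rw [Nat.cast_sub (by omega), Nat.cast_one]
  have hkR : (2 : ℝ) ≤ k := by exact_mod_cast hk
  have hn : (0 : ℝ) < n := by
    rcases Nat.eq_zero_or_pos n with rfl | hn
    · norm_num at hlog
    · exact_mod_cast hn
  have hqp : ((l * (n - 1).choose (k - 1) : ℕ) : ℝ) *
      ((1 - x) * (k - 2).factorial / (n : ℝ) ^ (k - 1)) ≤ l * (1 - x) / (k - 1 : ℕ) := by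
    rw [le_div_iff₀ (by rw [hK]; linarith), Nat.cast_mul]
    have hl0 : 0 ≤ (l : ℝ) * (1 - x) := mul_nonneg l.cast_nonneg (by linarith)
    calc _ = l * (1 - x) * ((n - 1).choose (k - 1) * (k - 2).factorial * (k - 1 : ℕ)) /
          (n : ℝ) ^ (k - 1) := by ring
      _ ≤ l * (1 - x) * (n : ℝ) ^ (k - 1) / (n : ℝ) ^ (k - 1) := by
          gcongr; exact choose_mul_factorial_le_pow n hk
      _ = l * (1 - x) := by field_simp
  have hexp := one_sub_mul_exp_sub_one_sub_le hx0.le (by linarith)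
  have hexp0 : 0 ≤ exp x - 1 := by linarith [one_le_exp hx0.le]
  have hlx : 5 * k * log n < l * x ^ 2 / 2 := by
    rw [div_mul_eq_mul_div, div_lt_iff₀ (by positivity)] at hl
    have hx2 : x ^ 2 = 0.64 * ε ^ 2 := by rw [hx]; ring
    nlinarith [mul_nonneg (k.cast_nonneg : (0 : ℝ) ≤ k) (zero_le_one.trans hlog)]
  rw [hK] at hqp ⊢
  calc _ = ((l * (n - 1).choose (k - 1) : ℕ) : ℝ) *
          ((1 - x) * (k - 2).factorial / (n : ℝ) ^ (k - 1)) * (exp x - 1) -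
        x * ((l - 1) / (k - 1)) := by ring
    _ ≤ l * (1 - x) / (k - 1) * (exp x - 1) - x * ((l - 1) / (k - 1)) := by gcongr
    _ = (l * ((1 - x) * (exp x - 1) - x) + x) / (k - 1) := by ring
    _ ≤ (l * -(x ^ 2 / 2) + x) / (k - 1) := by gcongr; linarith
    _ < -(2 * log n) := by
      rw [div_lt_iff₀ (by linarith)]
      nlinarith

theorem probHnp_eq_bernoulliProb (n k : ℕ) (p : ℝ) (A : Finset (Finset (Fin n)) → Prop) :
    probHnp n k p A = bernoulliProb p (univ.powersetCard k) A := by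
  rw [probHnp, bernoulliProb, ← sum_filter, ← sum_filter, card_powersetCard, card_univ,
    Fintype.card_fin]
  refine sum_congr ?_ fun _ _ => rfl
  ext H
  rw [mem_filter, mem_filter]
  simp only [mem_univ, true_and, IsUniform, mem_powerset, subset_iff, mem_powersetCard_univ]

/-- For `0 < ε < 1/2`, `k ≥ 2`, `n > 200k²/ε`,
`p = (1 - 0.8ε)·(k-2)!/n^{k-1}` and a fixed vertex `v`, in `H_{n,p;k}` the probability
that the component of `v` has more than `(16k/ε²)·log n` vertices is less than `n⁻²`. -/
theorem one_component_small (ε : ℝ) (hε0 : 0 < ε) (hε : ε < 1 / 2)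
    (k : ℕ) (hk : 2 ≤ k) (n : ℕ) (hn : (200 : ℝ) * k ^ 2 / ε < n) (v : Fin n) :
    probHnp n k ((1 - 0.8 * ε) * (Nat.factorial (k - 2)) / (n : ℝ) ^ (k - 1))
        (fun H => 16 * k / ε ^ 2 * Real.log n < ((component H v).ncard : ℝ))
      < ((n : ℝ) ^ 2)⁻¹ := by
  set p := (1 - 0.8 * ε) * (Nat.factorial (k - 2)) / (n : ℝ) ^ (k - 1)
  set L := 16 * k / ε ^ 2 * Real.log n
  obtain ⟨hkn, hlog⟩ := le_and_one_le_log_of_lt hε0 hε hk hn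
  obtain ⟨hp0, hp1⟩ : p ∈ Set.Icc 0 1 :=
    mul_factorial_div_pow_mem_Icc (by linarith) (by linarith) hk hkn
  calc probHnp n k p (fun H => L < (component H v).ncard)
      = bernoulliProb p (univ.powersetCard k) (fun H => L < (component H v).ncard) :=
        probHnp_eq_bernoulliProb n k p _
    _ ≤ bernoulliProb p (univ.powersetCard k) (fun H => ⌊L⌋₊ + 1 ≤ (component H v).ncard) :=
        bernoulliProb_mono hp0 hp1 fun H _ hL => (Nat.floor_lt (by positivity)).2 hL
    _ ≤ _ :=
        bernoulliProb_le_ncard_component (lam := 0.8 * ε) hp0 hp1 (by positivity) k (⌊L⌋₊ + 1) v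
    _ < exp (-(2 * log n)) := by
      rw [exp_lt_exp, Fintype.card_fin]
      exact exploration_exponent_lt hε0 hε hk hlog (by push_cast; exact Nat.lt_floor_add_one L)
    _ = ((n : ℝ) ^ 2)⁻¹ := by
      rw [exp_neg, ← Nat.cast_ofNat, ← log_pow, exp_log (pow_pos (Nat.cast_pos.2 (by omega)) 2)]
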